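/- For every real number y with y+n ≠ 0 for all natural numbers n (e.g. y > 0 or y not a nonpositive integer), and every real t with 0 ≤ t < 1, one has ∑_{n=0}^∞ (y+n)^{n} · (t·e^{-t})^n / n! = e^{y·t} / (1-t). -/

import Mathlib

/-!
For small `|t|`, expanding each `e^{-nt}` turns the left side into an absolutely convergent
double series; summed along the diagonals `n + m = N` it becomes `∑ t^N ∑_{k ≤ N} y^k / k!`,
the Cauchy product of the series of `e^{yt}` and `1/(1-t)`. Matching these diagonal coefficients
is a finite identity which, after expanding `(y+n)^n` binomially, reduces to `Δ^M x^M = M!`.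
The power series `∑ (y+n)^n x^n / n!` has radius at least `1/e`, and `|t e^{-t}| < 1/e` on an
interval containing `0` and `[0, 1)`, so both sides are real analytic there and the identity
theorem carries the equality from small `t` to all `t ∈ [0, 1)`.
-/

open Finset Nat Real Filter Topology Set

theorem sum_range_alternating_choose_mul_add_pow {R : Type*} [CommRing R] (x : R) (n : ℕ) :
    ∑ k ∈ range (n + 1), (-1) ^ (n - k) * n.choose k * (x + k) ^ n = n ! := by
  have h := congrFun (fwdDiff_iter_eq_factorial (R := R) (n := n)) x
  rw [fwdDiff_iter_eq_sum_shift] at h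
  simpa [zsmul_eq_mul] using h

theorem sum_antidiagonal_add_pow_mul_neg_add_pow {K : Type*} [Field K] [CharZero K] (x : K)
    (n : ℕ) :
    ∑ p ∈ antidiagonal n, (x + p.1) ^ p.1 * (-(x + p.1)) ^ p.2 / (p.1 ! * p.2 !) = 1 := by
  rw [Nat.sum_antidiagonal_eq_sum_range_succ
    (fun j l => (x + j) ^ j * (-(x + j)) ^ l / (j ! * l !))]
  calc ∑ k ∈ range n.succ, (x + k) ^ k * (-(x + k)) ^ (n - k) / (k ! * (n - k)!)
      = ∑ k ∈ range (n + 1), (-1) ^ (n - k) * n.choose k * (x + k) ^ n / n ! := by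
        refine sum_congr rfl fun k hk => ?_
        obtain ⟨l, rfl⟩ := Nat.exists_eq_add_of_le (Nat.lt_succ_iff.1 (mem_range.1 hk))
        have : ((k + l)! : K) ≠ 0 := Nat.cast_ne_zero.2 (factorial_ne_zero _)
        rw [Nat.cast_choose K (Nat.le_add_right k l), Nat.add_sub_cancel_left, neg_pow, pow_add]
        field_simp
    _ = 1 := by
        rw [← sum_div, sum_range_alternating_choose_mul_add_pow,
          div_self (Nat.cast_ne_zero.2 n.factorial_ne_zero)]

theorem Finset.Nat.sum_antidiagonal_sum_antidiagonal_fst {M : Type*} [AddCommMonoid M]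
    (f : ℕ → ℕ → ℕ → M) (n : ℕ) :
    ∑ p ∈ antidiagonal n, ∑ q ∈ antidiagonal p.1, f q.1 q.2 p.2 =
      ∑ p ∈ antidiagonal n, ∑ q ∈ antidiagonal p.2, f p.1 q.1 q.2 := by
  rw [sum_sigma', sum_sigma']
  refine sum_nbij' (fun x => ⟨(x.2.1, x.2.2 + x.1.2), (x.2.2, x.1.2)⟩)
    (fun x => ⟨(x.1.1 + x.2.1, x.2.2), (x.1.1, x.2.1)⟩) ?_ ?_ ?_ ?_ fun _ _ => rfl
  all_goals
    rintro ⟨⟨a, b⟩, ⟨c, d⟩⟩ h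
    simp only [mem_sigma, HasAntidiagonal.mem_antidiagonal] at h
    obtain ⟨rfl, rfl⟩ := h
    simp [add_assoc]

theorem add_pow_div_factorial {K : Type*} [Field K] [CharZero K] (a b : K) (n : ℕ) :
    (a + b) ^ n / n ! = ∑ p ∈ antidiagonal n, a ^ p.1 / p.1 ! * (b ^ p.2 / p.2 !) := by
  rw [(Commute.all a b).add_pow', sum_div]
  refine sum_congr rfl fun p hp => ?_
  rw [← HasAntidiagonal.mem_antidiagonal.1 hp, nsmul_eq_mul,
    Nat.cast_choose K (Nat.le_add_right p.1 p.2), Nat.add_sub_cancel_left]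
  have : ((p.1 + p.2)! : K) ≠ 0 := Nat.cast_ne_zero.2 (factorial_ne_zero _)
  field_simp

theorem sum_antidiagonal_add_pow_mul_neg_pow_div {K : Type*} [Field K] [CharZero K] (y : K)
    (n : ℕ) :
    ∑ p ∈ antidiagonal n, (y + p.1) ^ p.1 * (-(p.1 : K)) ^ p.2 / (p.1 ! * p.2 !) =
      ∑ p ∈ antidiagonal n, y ^ p.1 / p.1 ! := by
  calc _ = ∑ p ∈ antidiagonal n, ∑ q ∈ antidiagonal p.1, y ^ q.1 / q.1 ! *
          (((q.1 + q.2 : ℕ) : K) ^ q.2 / q.2 ! * ((-((q.1 + q.2 : ℕ) : K)) ^ p.2 / p.2 !)) := by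
        refine sum_congr rfl fun p _ => ?_
        rw [mul_div_mul_comm, add_pow_div_factorial, sum_mul]
        refine sum_congr rfl fun q hq => ?_
        rw [HasAntidiagonal.mem_antidiagonal.1 hq, mul_assoc]
    _ = ∑ p ∈ antidiagonal n, ∑ q ∈ antidiagonal p.2, y ^ p.1 / p.1 ! *
          (((p.1 + q.1 : ℕ) : K) ^ q.1 / q.1 ! * ((-((p.1 + q.1 : ℕ) : K)) ^ q.2 / q.2 !)) :=
        Nat.sum_antidiagonal_sum_antidiagonal_fst (fun k j l => y ^ k / k ! *
          (((k + j : ℕ) : K) ^ j / j ! * ((-((k + j : ℕ) : K)) ^ l / l !))) n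
    _ = _ := by
        refine sum_congr rfl fun p _ => ?_
        push_cast
        rw [← mul_sum]
        simp only [← mul_div_mul_comm, sum_antidiagonal_add_pow_mul_neg_add_pow, mul_one]

theorem HasSum.sum_antidiagonal {α A : Type*} [AddCommMonoid α] [TopologicalSpace α]
    [ContinuousAdd α] [RegularSpace α] [AddCommMonoid A] [HasAntidiagonal A] {f : A × A → α}
    {a : α} (hf : HasSum f a) : HasSum (fun n => ∑ p ∈ antidiagonal n, f p) a :=
  HasSum.sigma (HasAntidiagonal.sigmaAntidiagonalEquivProd.hasSum_iff.2 hf) fun n =>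
    (antidiagonal n).hasSum f

theorem Real.hasSum_pow_div_factorial (x : ℝ) : HasSum (fun n : ℕ => x ^ n / n !) (exp x) :=
  exp_eq_exp_ℝ ▸ NormedSpace.expSeries_div_hasSum_exp x

theorem abs_add_pow_div_factorial_mul_pow_le (y : ℝ) {r : ℝ} (hr : 0 ≤ r) (n : ℕ) :
    |(y + n) ^ n / n !| * r ^ n ≤ exp |y| * (exp 1 * r) ^ n := by
  have hyn : |y + n| ≤ |y| + n := (abs_add_le _ _).trans_eq (by rw [Nat.abs_cast])
  calc |(y + n) ^ n / n !| * r ^ n ≤ (|y| + n) ^ n / n ! * r ^ n := by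
        rw [abs_div, abs_pow, Nat.abs_cast]
        gcongr
    _ ≤ exp (|y| + n) * r ^ n := by gcongr; exact pow_div_factorial_le_exp _ (by positivity) n
    _ = exp |y| * (exp 1 * r) ^ n := by
      rw [exp_add, mul_pow, ← exp_nat_mul, mul_one, mul_assoc]

theorem summable_add_pow_div_factorial_mul_pow_mul_pow_div_factorial (y : ℝ) {t : ℝ}
    (ht : |t| * exp |t| < exp (-1)) :
    Summable fun p : ℕ × ℕ =>
      (y + p.1) ^ p.1 / p.1 ! * t ^ p.1 * ((p.1 * -t) ^ p.2 / p.2 !) := by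
  have hrow (n : ℕ) : HasSum (fun m => |(y + n) ^ n / n ! * t ^ n * ((n * -t) ^ m / m !)|)
      (|(y + n) ^ n / n !| * (|t| * exp |t|) ^ n) := by
    have e : (fun m => |(y + n) ^ n / n ! * t ^ n * ((n * -t) ^ m / m !)|) =
        fun m => |(y + n) ^ n / n !| * |t| ^ n * ((n * |t|) ^ m / m !) := by
      ext m
      simp only [abs_mul, abs_div, abs_pow, abs_neg, Nat.abs_cast]
    rw [e, mul_pow, ← exp_nat_mul, ← mul_assoc]
    exact (hasSum_pow_div_factorial _).mul_left _
  have hgeom : exp 1 * (|t| * exp |t|) < 1 :=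
    (mul_lt_mul_of_pos_left ht (exp_pos 1)).trans_eq (by rw [← exp_add]; norm_num)
  refine Summable.of_abs ((summable_prod_of_nonneg fun _ => abs_nonneg _).2
    ⟨fun n => (hrow n).summable, ?_⟩)
  simp only [fun n => (hrow n).tsum_eq]
  exact Summable.of_nonneg_of_le (fun n => by positivity)
    (fun n => abs_add_pow_div_factorial_mul_pow_le y (by positivity) n)
    ((summable_geometric_of_lt_one (by positivity) hgeom).mul_left _)

theorem hasSum_add_pow_mul_pow_div_factorial_of_abs_mul_exp_abs_lt (y : ℝ) {t : ℝ}
    (ht : |t| * exp |t| < exp (-1)) :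
    HasSum (fun n : ℕ => (y + n) ^ n * (t * exp (-t)) ^ n / n !) (exp (y * t) / (1 - t)) := by
  set a : ℕ × ℕ → ℝ :=
    fun p => (y + p.1) ^ p.1 / p.1 ! * t ^ p.1 * ((p.1 * -t) ^ p.2 / p.2 !)
  set b : ℕ × ℕ → ℝ := fun p => (y * t) ^ p.1 / p.1 ! * t ^ p.2
  have ha : Summable a := summable_add_pow_div_factorial_mul_pow_mul_pow_div_factorial y ht
  have hrow (n : ℕ) : HasSum (fun m => a (n, m)) ((y + n) ^ n * (t * exp (-t)) ^ n / n !) := by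
    have e : (y + n) ^ n * (t * exp (-t)) ^ n / n ! =
        (y + n) ^ n / n ! * t ^ n * exp (n * -t) := by
      rw [exp_nat_mul]; ring
    rw [e]
    exact (hasSum_pow_div_factorial _).mul_left _
  have ht1 : ‖t‖ < 1 := calc
    ‖t‖ ≤ |t| * exp |t| := le_mul_of_one_le_right (abs_nonneg t) (one_le_exp (abs_nonneg t))
    _ < exp (-1) := ht
    _ < 1 := exp_lt_one_iff.2 (by norm_num)
  have hb : HasSum b (exp (y * t) * (1 - t)⁻¹) :=
    (hasSum_pow_div_factorial (y * t)).mul (hasSum_geometric_of_norm_lt_one ht1)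
      (summable_mul_of_summable_norm (NormedSpace.norm_expSeries_div_summable (y * t))
        (summable_norm_geometric_of_norm_lt_one ht1))
  have hdiag (n : ℕ) : ∑ p ∈ antidiagonal n, a p = ∑ p ∈ antidiagonal n, b p := calc
    ∑ p ∈ antidiagonal n, a p
        = t ^ n *
          ∑ p ∈ antidiagonal n, (y + p.1) ^ p.1 * (-(p.1 : ℝ)) ^ p.2 / (p.1 ! * p.2 !) := by
      rw [mul_sum]
      refine sum_congr rfl fun p hp => ?_
      rw [← HasAntidiagonal.mem_antidiagonal.1 hp]
      ring
    _ = t ^ n * ∑ p ∈ antidiagonal n, y ^ p.1 / p.1 ! := by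
      rw [sum_antidiagonal_add_pow_mul_neg_pow_div]
    _ = ∑ p ∈ antidiagonal n, b p := by
      rw [mul_sum]
      refine sum_congr rfl fun p hp => ?_
      rw [← HasAntidiagonal.mem_antidiagonal.1 hp]
      ring
  have hsum_a : ∑' p, a p = exp (y * t) / (1 - t) := by
    rw [div_eq_mul_inv]
    refine ha.hasSum.sum_antidiagonal.unique ?_
    simpa only [hdiag] using hb.sum_antidiagonal
  exact hsum_a ▸ ha.hasSum.prod_fiberwise hrow

noncomputable def abelSeries (y x : ℝ) : ℝ := ∑' n : ℕ, (y + n) ^ n * x ^ n / n !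

theorem analyticAt_abelSeries (y : ℝ) {x : ℝ} (hx : |x| < exp (-1)) :
    AnalyticAt ℝ (abelSeries y) x := by
  set p := FormalMultilinearSeries.ofScalars ℝ fun n : ℕ => (y + n) ^ n / (n ! : ℝ)
  have hsum : p.sum = abelSeries y := by
    ext x
    refine (FormalMultilinearSeries.ofScalars_sum_eq _ x).trans (tsum_congr fun n => ?_)
    rw [smul_eq_mul, div_mul_eq_mul_div]
  have hradius : ENNReal.ofReal (exp (-1)) ≤ p.radius := by
    refine p.le_radius_of_bound (exp |y|) fun n => ?_
    rw [FormalMultilinearSeries.ofScalars_norm, Real.norm_eq_abs]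
    simpa [← exp_add, max_eq_left (exp_pos (-1)).le] using
      abs_add_pow_div_factorial_mul_pow_le y (exp_pos (-1)).le n
  have hx' : ‖x‖ₑ < p.radius := by
    rw [← ofReal_norm]
    exact ((ENNReal.ofReal_lt_ofReal_iff (exp_pos _)).2 hx).trans_le hradius
  rw [← hsum]
  exact (p.hasFPowerSeriesOnBall (pos_of_gt hx')).analyticAt_of_mem
    (by rwa [Metric.mem_eball, edist_zero_right])

theorem mul_exp_neg_lt_exp_neg_one {s : ℝ} (hs : s ≠ 1) : s * exp (-s) < exp (-1) := by
  have h := add_one_lt_exp (sub_ne_zero.2 hs)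
  rw [sub_add_cancel] at h
  calc s * exp (-s) < exp (s - 1) * exp (-s) := mul_lt_mul_of_pos_right h (exp_pos _)
    _ = exp (-1) := by rw [← exp_add]; ring_nf

theorem kolberg_G_zero_general (y : ℝ)
    (t : ℝ) (ht0 : 0 ≤ t) (ht1 : t < 1) :
    ∑' n : ℕ, (y + n) ^ n * (t * Real.exp (-t)) ^ n / (Nat.factorial n : ℝ)
      = Real.exp (y * t) / (1 - t) := by
  obtain ⟨δ, hδ, hsmall⟩ :
      ∃ δ > 0, ∀ s : ℝ, |s| < δ → |s| * exp |s| < exp (-1) := by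
    have h : ∀ᶠ s in 𝓝 (0 : ℝ), |s| * exp |s| < exp (-1) :=
      ContinuousAt.eventually_lt (by fun_prop) continuousAt_const (by simp [exp_pos])
    simpa using Metric.eventually_nhds_iff.1 h
  have hconv (s : ℝ) (hs : s ∈ Ioo (-δ) 1) : |s * exp (-s)| < exp (-1) := by
    rcases le_or_gt 0 s with h0 | h0
    · rw [abs_of_nonneg (by positivity)]
      exact mul_exp_neg_lt_exp_neg_one hs.2.ne
    · rw [abs_mul, abs_exp, ← abs_of_neg h0]
      exact hsmall s (abs_lt.2 ⟨hs.1, by linarith⟩)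
  have hlhs : AnalyticOnNhd ℝ (fun s => abelSeries y (s * exp (-s))) (Ioo (-δ) 1) :=
    fun s hs => (analyticAt_abelSeries y (hconv s hs)).comp
      (f := fun s => s * exp (-s)) (by fun_prop)
  have hrhs : AnalyticOnNhd ℝ (fun s => exp (y * s) / (1 - s)) (Ioo (-δ) 1) :=
    fun s hs => by have := sub_ne_zero.2 hs.2.ne'; fun_prop (disch := assumption)
  have hnear :
      (fun s => abelSeries y (s * exp (-s))) =ᶠ[𝓝 0] fun s => exp (y * s) / (1 - s) := by
    filter_upwards [Metric.ball_mem_nhds 0 hδ] with s hs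
    exact (hasSum_add_pow_mul_pow_div_factorial_of_abs_mul_exp_abs_lt y
      (hsmall s (by simpa using hs))).tsum_eq
  exact hlhs.eqOn_of_preconnected_of_eventuallyEq hrhs isPreconnected_Ioo
    ⟨neg_lt_zero.2 hδ, one_pos⟩ hnear ⟨by linarith, ht1⟩

/-- The identity `G_0(t,y) = ∑_{n=0}^∞ (y+n)^n (t e^{-t})^n / n! = e^{yt}/(1-t)`
for `0 ≤ t < 1` and `y` such that `y + n ≠ 0` for all naturals `n`. -/
theorem kolberg_G_zero (y : ℝ) (hyn : ∀ n : ℕ, y + (n : ℝ) ≠ 0)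
    (t : ℝ) (ht0 : 0 ≤ t) (ht1 : t < 1) :
    ∑' n : ℕ, (y + n) ^ n * (t * Real.exp (-t)) ^ n / (Nat.factorial n : ℝ)
      = Real.exp (y * t) / (1 - t) :=
  kolberg_G_zero_general y t ht0 ht1
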